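/- arXiv:nlin/0412017 — 2 statements merged into one kernel-verified Lean document; each statement's English description precedes it below -/
import Mathlib

section
/- The Hamiltonian H = Σ_{i=1}^N (λ_i R_i + S_i) equals Σ_{i=1}^N ⟨W, λ_i Y_i + Z_i⟩ + (1/2) Σ_{i,k=1}^N ⟨Y_i, Y_k⟩, where R_i and S_i are the integrals of the rational Lagrange chain. -/
noncomputable section

/-- Euclidean inner product on `ℝ³`. -/
def dot3 (v u : Fin 3 → ℝ) : ℝ := ∑ α : Fin 3, v α * u α

def R {N : ℕ} (W : Fin 3 → ℝ) (lam : Fin N → ℝ) (Y Z : Fin N → Fin 3 → ℝ)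
    (i : Fin N) : ℝ :=
  dot3 W (Y i) +
    ∑ k ∈ Finset.univ.erase i,
      (dot3 (Y i) (Y k) / (lam i - lam k)
        + (dot3 (Y i) (Z k) - dot3 (Y k) (Z i)) / (lam i - lam k) ^ 2
        - 2 * dot3 (Z i) (Z k) / (lam i - lam k) ^ 3)

def S {N : ℕ} (W : Fin 3 → ℝ) (lam : Fin N → ℝ) (Y Z : Fin N → Fin 3 → ℝ)
    (i : Fin N) : ℝ :=
  dot3 W (Z i) + dot3 (Y i) (Y i) / 2 +
    ∑ k ∈ Finset.univ.erase i,
      (dot3 (Y k) (Z i) / (lam i - lam k)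
        + dot3 (Z i) (Z k) / (lam i - lam k) ^ 2)

lemma dot3_comm (v u : Fin 3 → ℝ) : dot3 v u = dot3 u v := by
  unfold dot3; exact Finset.sum_congr rfl fun α _ => mul_comm _ _

/-- The off-diagonal summand. -/
def F {N : ℕ} (lam : Fin N → ℝ) (Y Z : Fin N → Fin 3 → ℝ) (i k : Fin N) : ℝ :=
  lam i * (dot3 (Y i) (Y k) / (lam i - lam k)
        + (dot3 (Y i) (Z k) - dot3 (Y k) (Z i)) / (lam i - lam k) ^ 2
        - 2 * dot3 (Z i) (Z k) / (lam i - lam k) ^ 3)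
    + (dot3 (Y k) (Z i) / (lam i - lam k)
        + dot3 (Z i) (Z k) / (lam i - lam k) ^ 2)

lemma F_diag {N : ℕ} (lam : Fin N → ℝ) (Y Z : Fin N → Fin 3 → ℝ) (i : Fin N) :
    F lam Y Z i i = 0 := by
  simp [F, sub_self]

lemma F_add {N : ℕ} (lam : Fin N → ℝ) (hlam : Function.Injective lam)
    (Y Z : Fin N → Fin 3 → ℝ) (i k : Fin N) :
    F lam Y Z i k + F lam Y Z k i
      = dot3 (Y i) (Y k) - (if i = k then dot3 (Y i) (Y i) else 0) := by
  by_cases h : i = k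
  · subst h; simp [F_diag]
  · have hd : lam i - lam k ≠ 0 := sub_ne_zero.mpr (fun he => h (hlam he))
    have hd' : lam k - lam i ≠ 0 := sub_ne_zero.mpr (fun he => h (hlam he).symm)
    simp only [F, if_neg h]
    rw [dot3_comm (Y k) (Y i), dot3_comm (Z k) (Z i)]
    field_simp
    ring

/-- The Hamiltonian `H = Σ_i (λ_i R_i + S_i)` equals
`Σ_i ⟨W, λ_i Y_i + Z_i⟩ + (1/2) Σ_{i,k} ⟨Y_i, Y_k⟩`. -/
theorem hamiltonian_lagrange_chain {N : ℕ} (w : ℝ) (lam : Fin N → ℝ)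
    (hlam : Function.Injective lam) (Y Z : Fin N → Fin 3 → ℝ) :
    ∑ i : Fin N, (lam i * R ![0, 0, w] lam Y Z i + S ![0, 0, w] lam Y Z i)
      = ∑ i : Fin N, dot3 ![0, 0, w] (lam i • Y i + Z i)
        + (1 / 2) * ∑ i : Fin N, ∑ k : Fin N, dot3 (Y i) (Y k) := by
  set W : Fin 3 → ℝ := ![0, 0, w] with hW
  have key : ∀ i : Fin N,
      lam i * R W lam Y Z i + S W lam Y Z i
        = (lam i * dot3 W (Y i) + dot3 W (Z i) + dot3 (Y i) (Y i) / 2)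
          + ∑ k : Fin N, F lam Y Z i k := by
    intro i
    rw [← Finset.sum_erase Finset.univ (F_diag lam Y Z i)]
    unfold R S F
    simp only [Finset.sum_add_distrib, mul_add, Finset.mul_sum]
    ring
  rw [Finset.sum_congr rfl fun i _ => key i]
  have hdouble : ∑ i : Fin N, ∑ k : Fin N, F lam Y Z i k
      = (1 / 2) * (∑ i : Fin N, ∑ k : Fin N, dot3 (Y i) (Y k)
          - ∑ i : Fin N, dot3 (Y i) (Y i)) := by
    have h2 : (2 : ℝ) * (∑ i : Fin N, ∑ k : Fin N, F lam Y Z i k)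
        = ∑ i : Fin N, ∑ k : Fin N, (F lam Y Z i k + F lam Y Z k i) := by
      simp only [Finset.sum_add_distrib]
      rw [Finset.sum_comm (f := fun i k => F lam Y Z k i)]
      ring
    have h3 : ∑ i : Fin N, ∑ k : Fin N, (F lam Y Z i k + F lam Y Z k i)
        = ∑ i : Fin N, ∑ k : Fin N, dot3 (Y i) (Y k)
          - ∑ i : Fin N, dot3 (Y i) (Y i) := by
      simp only [F_add lam hlam Y Z, Finset.sum_sub_distrib]
      congr 1
      refine Finset.sum_congr rfl fun i _ => ?_
      simp
    linarith [h2, h3]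
  have hrhs : ∀ i : Fin N, dot3 W (lam i • Y i + Z i)
      = lam i * dot3 W (Y i) + dot3 W (Z i) := by
    intro i
    simp only [dot3, Pi.add_apply, Pi.smul_apply, smul_eq_mul, Finset.mul_sum,
      ← Finset.sum_add_distrib]
    exact Finset.sum_congr rfl fun α _ => by ring
  simp only [hrhs, Finset.sum_add_distrib]
  rw [hdouble, ← Finset.sum_div]
  ring
end
end

section
/- Suppose M(λ;η) L(λ) = L̃(λ) M(λ;η) holds for all λ ∈ ℂ with λ ∉ {η, λ_1, …, λ_N}, where L and L̃ are Lax matrices of the rational Lagrange chain with the same parameters w ≠ 0, λ_i, and M(λ;η) = [[λ − η + pq, p],[q, 1]]. Then comparing the leading asymptotics as λ → ∞ forces p = (1/(2w)) Σ_{j=1}^N y_j⁻ and q = (1/(2w)) Σ_{j=1}^N ỹ_j⁺. -/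
open Matrix Complex

noncomputable section

/-- The Lax matrix of the rational Lagrange chain in complex-conjugated coordinates:
`L_{11} = iw + iΣ_i [y_i³/(λ−λ_i) + z_i³/(λ−λ_i)²]`, `L_{12}` with `y_i⁻ = y_i¹ − i y_i²`,
`L_{21}` with `y_i⁺ = y_i¹ + i y_i²`, `L_{22} = −L_{11}`. -/
def Lax {N : ℕ} (w : ℝ) (lam : Fin N → ℂ) (y z : Fin N → Fin 3 → ℝ) (l : ℂ) :
    Matrix (Fin 2) (Fin 2) ℂ :=
  !![I * w + I * ∑ i : Fin N, ((y i 2 : ℝ) / (l - lam i) + (z i 2 : ℝ) / (l - lam i) ^ 2),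
      I * ∑ i : Fin N, (((y i 0 : ℝ) - I * (y i 1 : ℝ)) / (l - lam i)
        + ((z i 0 : ℝ) - I * (z i 1 : ℝ)) / (l - lam i) ^ 2);
     I * ∑ i : Fin N, (((y i 0 : ℝ) + I * (y i 1 : ℝ)) / (l - lam i)
        + ((z i 0 : ℝ) + I * (z i 1 : ℝ)) / (l - lam i) ^ 2),
      -(I * w + I * ∑ i : Fin N, ((y i 2 : ℝ) / (l - lam i) + (z i 2 : ℝ) / (l - lam i) ^ 2))]

/-
Write the Lax matrix as `i w σ₃` plus sums of simple and double poles at the `λ_i`. As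
`λ → ∞` these pole sums tend to `0`, while `(λ − c)` times a pole sum tends to the sum of its
simple-pole coefficients. Hence the `(1,2)` entry of `M L = L̃ M`, namely
`(λ − η + pq) L₁₂ + p L₂₂ = p L̃₁₁ + L̃₁₂`, tends to `i Σ y⁻ − i w p = i w p`, and the `(2,1)`
entry `q L₁₁ + L₂₁ = (λ − η + pq) L̃₂₁ + q L̃₂₂` tends to `i w q = i Σ ỹ⁺ − i w q`.
-/

open Filter Bornology Topology

section PoleSum

variable {𝕜 : Type*} [NormedField 𝕜]

lemma tendsto_inv_sub_cobounded (e : 𝕜) :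
    Tendsto (fun l => (l - e)⁻¹) (cobounded 𝕜) (𝓝 0) :=
  tendsto_inv₀_cobounded.comp (tendsto_sub_const_cobounded e)

lemma tendsto_pole_cobounded (a b e : 𝕜) :
    Tendsto (fun l => a / (l - e) + b / (l - e) ^ 2) (cobounded 𝕜) (𝓝 0) := by
  have hu := tendsto_inv_sub_cobounded e
  simpa [div_eq_mul_inv, inv_pow] using (hu.const_mul a).add ((hu.pow 2).const_mul b)

lemma tendsto_sub_mul_pole_cobounded (a b c e : 𝕜) :
    Tendsto (fun l => (l - c) * (a / (l - e) + b / (l - e) ^ 2)) (cobounded 𝕜) (𝓝 a) := by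
  have hu := tendsto_inv_sub_cobounded e
  -- `l - c = (l - e) + (e - c)` makes the function a polynomial in `u = (l - e)⁻¹`
  have h := ((hu.const_mul (b + (e - c) * a)).const_add a).add
    ((hu.pow 2).const_mul ((e - c) * b))
  simp only [mul_zero, add_zero, ne_eq, OfNat.ofNat_ne_zero, not_false_eq_true, zero_pow] at h
  refine h.congr' ?_
  filter_upwards [eventually_ne_cobounded e] with l hl
  have : l - e ≠ 0 := sub_ne_zero.2 hl
  field_simp
  ring

def poleSum {ι : Type*} [Fintype ι] (a b e : ι → 𝕜) (l : 𝕜) : 𝕜 :=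
  ∑ i, (a i / (l - e i) + b i / (l - e i) ^ 2)

variable {ι : Type*} [Fintype ι] (a b e : ι → 𝕜)

lemma tendsto_poleSum_cobounded : Tendsto (poleSum a b e) (cobounded 𝕜) (𝓝 0) := by
  unfold poleSum
  simpa using tendsto_finsetSum Finset.univ fun i _ => tendsto_pole_cobounded (a i) (b i) (e i)

lemma tendsto_sub_mul_poleSum_cobounded (c : 𝕜) :
    Tendsto (fun l => (l - c) * poleSum a b e l) (cobounded 𝕜) (𝓝 (∑ i, a i)) := by
  simpa only [poleSum, Finset.mul_sum] using
    tendsto_finsetSum Finset.univ fun i _ => tendsto_sub_mul_pole_cobounded (a i) (b i) c (e i)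

end PoleSum

-- `v⁺ = v¹ + i v²` and `v⁻ = v¹ − i v²`, the components being indexed from `0`
def spinPlus (v : Fin 3 → ℝ) : ℂ := v 0 + I * v 1

def spinMinus (v : Fin 3 → ℝ) : ℂ := v 0 - I * v 1

section Lax

variable {N : ℕ} (w : ℝ) (lam : Fin N → ℂ) (y z : Fin N → Fin 3 → ℝ)

lemma lax_eq_poleSum (l : ℂ) :
    Lax w lam y z l =
      !![I * w + I * poleSum (fun i => (y i 2 : ℂ)) (fun i => (z i 2 : ℂ)) lam l,
          I * poleSum (fun i => spinMinus (y i)) (fun i => spinMinus (z i)) lam l;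
         I * poleSum (fun i => spinPlus (y i)) (fun i => spinPlus (z i)) lam l,
          -(I * w + I * poleSum (fun i => (y i 2 : ℂ)) (fun i => (z i 2 : ℂ)) lam l)] :=
  rfl

lemma tendsto_lax_cobounded :
    Tendsto (Lax w lam y z) (cobounded ℂ) (𝓝 !![I * w, 0; 0, -(I * w)]) := by
  have h3 := tendsto_poleSum_cobounded (fun i => (y i 2 : ℂ)) (fun i => (z i 2 : ℂ)) lam
  have hm := tendsto_poleSum_cobounded (fun i => spinMinus (y i)) (fun i => spinMinus (z i)) lam
  have hp := tendsto_poleSum_cobounded (fun i => spinPlus (y i)) (fun i => spinPlus (z i)) lam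
  refine tendsto_pi_nhds.2 fun i => tendsto_pi_nhds.2 fun j => ?_
  fin_cases i <;> fin_cases j <;>
    simp only [lax_eq_poleSum, Fin.zero_eta, Fin.mk_one, of_apply, cons_val', cons_val_zero,
      cons_val_one, cons_val_fin_one]
  · simpa using (h3.const_mul I).const_add (I * w)
  · simpa using hm.const_mul I
  · simpa using hp.const_mul I
  · simpa using ((h3.const_mul I).const_add (I * w)).neg

lemma tendsto_sub_mul_lax_zero_one (c : ℂ) :
    Tendsto (fun l => (l - c) * Lax w lam y z l 0 1) (cobounded ℂ)
      (𝓝 (I * ∑ i, spinMinus (y i))) := by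
  refine ((tendsto_sub_mul_poleSum_cobounded _ (fun i => spinMinus (z i)) lam c).const_mul I).congr
    fun l => ?_
  simp only [lax_eq_poleSum, of_apply, cons_val', cons_val_zero, cons_val_one, cons_val_fin_one]
  ring

lemma tendsto_sub_mul_lax_one_zero (c : ℂ) :
    Tendsto (fun l => (l - c) * Lax w lam y z l 1 0) (cobounded ℂ)
      (𝓝 (I * ∑ i, spinPlus (y i))) := by
  refine ((tendsto_sub_mul_poleSum_cobounded _ (fun i => spinPlus (z i)) lam c).const_mul I).congr
    fun l => ?_
  simp only [lax_eq_poleSum, of_apply, cons_val', cons_val_zero, cons_val_one, cons_val_fin_one]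
  ring

end Lax

section Intertwining

variable {R : Type*} [CommRing R] {a p q : R} {L L' : Matrix (Fin 2) (Fin 2) R}

lemma intertwining_apply_zero_one (h : !![a, p; q, 1] * L = L' * !![a, p; q, 1]) :
    a * L 0 1 + p * L 1 1 = p * L' 0 0 + L' 0 1 := by
  have h01 := congr_fun₂ h 0 1
  simp only [Matrix.mul_apply, Fin.sum_univ_two, of_apply, cons_val', cons_val_fin_one,
    cons_val_zero, cons_val_one, mul_one] at h01
  linear_combination h01

lemma intertwining_apply_one_zero (h : !![a, p; q, 1] * L = L' * !![a, p; q, 1]) :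
    q * L 0 0 + L 1 0 = a * L' 1 0 + q * L' 1 1 := by
  have h10 := congr_fun₂ h 1 0
  simp only [Matrix.mul_apply, Fin.sum_univ_two, of_apply, cons_val', cons_val_fin_one,
    cons_val_zero, cons_val_one, one_mul] at h10
  linear_combination h10

end Intertwining

theorem one_point_backlund_pq_general {N : ℕ} (w : ℝ) (hw : w ≠ 0)
    (lam : Fin N → ℂ)
    (y z yt zt : Fin N → Fin 3 → ℝ) (η p q : ℂ)
    (h : ∀ l : ℂ, l ≠ η → (∀ i, l ≠ lam i) →
      (!![l - η + p * q, p; q, 1] : Matrix (Fin 2) (Fin 2) ℂ) * Lax w lam y z l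
        = Lax w lam yt zt l * !![l - η + p * q, p; q, 1]) :
    p = (1 / (2 * (w : ℂ))) * ∑ j : Fin N, ((y j 0 : ℝ) - I * (y j 1 : ℝ)) ∧
    q = (1 / (2 * (w : ℂ))) * ∑ j : Fin N, ((yt j 0 : ℝ) + I * (yt j 1 : ℝ)) := by
  have hcomm : ∀ᶠ l in cobounded ℂ, !![l - (η - p * q), p; q, 1] * Lax w lam y z l
      = Lax w lam yt zt l * !![l - (η - p * q), p; q, 1] := by
    filter_upwards [eventually_ne_cobounded η,
      eventually_all.2 fun i => eventually_ne_cobounded (lam i)] with l hη hlam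
    simpa only [sub_sub_eq_add_sub, add_sub_right_comm] using h l hη hlam
  have hL := tendsto_lax_cobounded w lam y z
  have hLt := tendsto_lax_cobounded w lam yt zt
  have hp := tendsto_nhds_unique_of_eventuallyEq
    ((tendsto_sub_mul_lax_zero_one w lam y z (η - p * q)).add
      (((hL.apply_nhds 1).apply_nhds 1).const_mul p))
    ((((hLt.apply_nhds 0).apply_nhds 0).const_mul p).add ((hLt.apply_nhds 0).apply_nhds 1))
    (hcomm.mono fun _ => intertwining_apply_zero_one)
  have hq := tendsto_nhds_unique_of_eventuallyEq
    ((((hL.apply_nhds 0).apply_nhds 0).const_mul q).add ((hL.apply_nhds 1).apply_nhds 0))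
    ((tendsto_sub_mul_lax_one_zero w lam yt zt (η - p * q)).add
      (((hLt.apply_nhds 1).apply_nhds 1).const_mul q))
    (hcomm.mono fun _ => intertwining_apply_one_zero)
  simp only [of_apply, cons_val', cons_val_zero, cons_val_one, empty_val', cons_val_fin_one,
    add_zero, mul_neg] at hp hq
  have h2w : (2 * w : ℂ) ≠ 0 := by exact_mod_cast mul_ne_zero two_ne_zero hw
  have hp' : 2 * w * p = ∑ j, spinMinus (y j) :=
    mul_left_cancel₀ I_ne_zero (by linear_combination -hp)
  have hq' : 2 * w * q = ∑ j, spinPlus (yt j) :=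
    mul_left_cancel₀ I_ne_zero (by linear_combination hq)
  rw [one_div_mul_eq_div, one_div_mul_eq_div, eq_div_iff h2w, eq_div_iff h2w, mul_comm p, mul_comm q]
  exact ⟨hp', hq'⟩

/-- If `M(λ;η) L(λ) = L̃(λ) M(λ;η)` holds for all admissible `λ`, where `L, L̃` are Lax
matrices of the rational Lagrange chain with the same `w ≠ 0` and `λ_i`, and
`M(λ;η) = [[λ − η + pq, p],[q, 1]]`, then comparing asymptotics as `λ → ∞` forces
`p = (1/(2w)) Σ_j y_j⁻` and `q = (1/(2w)) Σ_j ỹ_j⁺`. -/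
theorem one_point_backlund_pq {N : ℕ} (w : ℝ) (hw : w ≠ 0)
    (lam : Fin N → ℂ) (hlam : Function.Injective lam)
    (y z yt zt : Fin N → Fin 3 → ℝ) (η p q : ℂ)
    (h : ∀ l : ℂ, l ≠ η → (∀ i, l ≠ lam i) →
      (!![l - η + p * q, p; q, 1] : Matrix (Fin 2) (Fin 2) ℂ) * Lax w lam y z l
        = Lax w lam yt zt l * !![l - η + p * q, p; q, 1]) :
    p = (1 / (2 * (w : ℂ))) * ∑ j : Fin N, ((y j 0 : ℝ) - I * (y j 1 : ℝ)) ∧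
    q = (1 / (2 * (w : ℂ))) * ∑ j : Fin N, ((yt j 0 : ℝ) + I * (yt j 1 : ℝ)) :=
  one_point_backlund_pq_general w hw lam y z yt zt η p q h
end
end
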